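/- Let n ≥ 1 and let c : [0,1] → M₂(ℂ) satisfy c(0) = I₂, c(1) = the 2×2 swap matrix [[0,1],[1,0]], and c(θ) unitary for every θ ∈ [0,1]. Suppose D ∈ Mₙ(ℂ) has a zero cross at index j, where 1 ≤ j ≤ n. Then for every 1 ≤ i ≤ j and every ξ ∈ [0,1], 𝔯(w_j^i(ξ)·D·w_j^i(ξ)*) ≤ 𝔯(D) + 2. -/
import Mathlib


/-- `D` has a zero cross at index `k`: every entry in the `k`-th row and every entry
in the `k`-th column of `D` is `0`. -/
def hasZeroCross {n : ℕ} (D : Matrix (Fin n) (Fin n) ℂ) (k : Fin n) : Prop :=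
  (∀ q : Fin n, D k q = 0) ∧ (∀ p : Fin n, D p k = 0)

/-- The bandwidth `𝔯(D)` of a matrix: the least `m : ℕ` such that `D p q = 0`
whenever `|p - q| ≥ m`. -/
noncomputable def bandwidth {n : ℕ} (D : Matrix (Fin n) (Fin n) ℂ) : ℕ :=
  sInf {m : ℕ | ∀ p q : Fin n, m ≤ Nat.dist (p : ℕ) (q : ℕ) → D p q = 0}

/-- Given a path `c : [0,1] → M₂(ℂ)`, the matrix `u_{(i j)}(θ) ∈ Mₙ(ℂ)` agreeing with
the identity except that its `(i,i)`, `(i,j)`, `(j,i)`, `(j,j)` entries are the entries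
of `c θ`.  (For `i = j` it is the identity matrix.) -/
def uSwap {n : ℕ} (c : ℝ → Matrix (Fin 2) (Fin 2) ℂ) (i j : Fin n) (θ : ℝ) :
    Matrix (Fin n) (Fin n) ℂ :=
  if i = j then 1 else
    Matrix.of fun p q =>
      if p = i ∧ q = i then c θ 0 0
      else if p = i ∧ q = j then c θ 0 1
      else if p = j ∧ q = i then c θ 1 0
      else if p = j ∧ q = j then c θ 1 1
      else if p = q then 1 else 0

/-- The function `δ_j^i : [0,1] → [0,1]`: `0` on `[0, (i-1)/j]`, linear (`j ξ - (i-1)`)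
on `[(i-1)/j, i/j]`, and `1` on `[i/j, 1]`. -/
noncomputable def deltaFun (j i : ℕ) (ξ : ℝ) : ℝ :=
  min 1 (max 0 ((j : ℝ) * ξ - ((i : ℝ) - 1)))

/-- The unitary `w_j^i(ξ) := u_{(i i+1)}(δ_{j-i}^{j-i}(ξ)) ⋯ u_{(j-1 j)}(δ_{j-i}^{1}(ξ))`
(1-based indices `i ≤ j`; for `i = j` it is the identity). -/
noncomputable def wMat (n : ℕ) (c : ℝ → Matrix (Fin 2) (Fin 2) ℂ) (i j : ℕ)
    (hi : 1 ≤ i) (hjn : j ≤ n) (hij : i ≤ j) (ξ : ℝ) : Matrix (Fin n) (Fin n) ℂ :=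
  (List.ofFn fun t : Fin (j - i) =>
    uSwap c (⟨i + (t : ℕ) - 1, by have := t.2; omega⟩ : Fin n)
      (⟨i + (t : ℕ), by have := t.2; omega⟩ : Fin n)
      (deltaFun (j - i) (j - i - (t : ℕ)) ξ)).prod

/-! ### auxiliary -/

noncomputable def fac (n : ℕ) (c : ℝ → Matrix (Fin 2) (Fin 2) ℂ) (i j : ℕ) (ξ : ℝ) (t : ℕ) :
    Matrix (Fin n) (Fin n) ℂ :=
  if h : 1 ≤ i ∧ i + t < j ∧ j ≤ n then
    uSwap c (⟨i + t - 1, by omega⟩ : Fin n) (⟨i + t, by omega⟩ : Fin n)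
      (deltaFun (j - i) (j - i - t) ξ)
  else 1

noncomputable def Tm (n : ℕ) (c : ℝ → Matrix (Fin 2) (Fin 2) ℂ) (i j : ℕ) (ξ : ℝ) (s : ℕ) :
    Matrix (Fin n) (Fin n) ℂ :=
  (((List.range (j - i - s)).map fun t => fac n c i j ξ (s + t))).prod

lemma wMat_eq_Tm (n : ℕ) (c : ℝ → Matrix (Fin 2) (Fin 2) ℂ) (i j : ℕ)
    (hi : 1 ≤ i) (hjn : j ≤ n) (hij : i ≤ j) (ξ : ℝ) :
    wMat n c i j hi hjn hij ξ = Tm n c i j ξ 0 := by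
  unfold wMat Tm
  congr 1
  apply List.ext_getElem
  · simp
  · intro t h1 h2
    simp only [List.getElem_ofFn, List.getElem_map, List.getElem_range]
    have ht : t < j - i := by simpa using h1
    rw [fac, dif_pos ⟨hi, by omega, hjn⟩]
    simp [Nat.zero_add]

lemma Tm_succ (n : ℕ) (c : ℝ → Matrix (Fin 2) (Fin 2) ℂ) (i j : ℕ) (ξ : ℝ) (s : ℕ)
    (hs : s < j - i) :
    Tm n c i j ξ s = fac n c i j ξ s * Tm n c i j ξ (s + 1) := by
  unfold Tm
  rw [show j - i - s = (j - i - (s + 1)) + 1 by omega, List.range_succ_eq_map,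
    List.map_cons, List.prod_cons, List.map_map]
  refine congrArg₂ (· * ·) rfl ?_
  congr 1
  apply List.map_congr_left
  intro t _
  simp only [Function.comp_apply]
  rw [show s + t.succ = s + 1 + t by omega]

lemma Tm_last (n : ℕ) (c : ℝ → Matrix (Fin 2) (Fin 2) ℂ) (i j : ℕ) (ξ : ℝ) (s : ℕ)
    (hs : j - i ≤ s) : Tm n c i j ξ s = 1 := by
  unfold Tm
  rw [show j - i - s = 0 by omega]
  simp

lemma uSwap_ne_zero {n : ℕ} {c : ℝ → Matrix (Fin 2) (Fin 2) ℂ} {a b : Fin n} {θ : ℝ}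
    {p q : Fin n} (h : uSwap c a b θ p q ≠ 0) :
    q = p ∨ ((p = a ∨ p = b) ∧ (q = a ∨ q = b)) := by
  unfold uSwap at h
  split_ifs at h with h1
  · left
    by_contra hq
    exact h (Matrix.one_apply_ne (Ne.symm hq))
  · simp only [Matrix.of_apply] at h
    split_ifs at h with c1 c2 c3 c4 c5
    · exact Or.inr ⟨Or.inl c1.1, Or.inl c1.2⟩
    · exact Or.inr ⟨Or.inl c2.1, Or.inr c2.2⟩
    · exact Or.inr ⟨Or.inr c3.1, Or.inl c3.2⟩
    · exact Or.inr ⟨Or.inr c4.1, Or.inr c4.2⟩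
    · exact Or.inl c5.symm
    · exact absurd rfl h

lemma uSwap_eq_one {n : ℕ} {c : ℝ → Matrix (Fin 2) (Fin 2) ℂ} {a b : Fin n} {θ : ℝ}
    (h : c θ = 1) : uSwap c a b θ = 1 := by
  unfold uSwap
  split_ifs with h1
  · rfl
  · ext p q
    simp only [Matrix.of_apply, h, Matrix.one_apply]
    split_ifs <;> simp_all <;>
      (exfalso; obtain ⟨rfl, h'⟩ := ‹_ ∧ _›; first | exact h1 h' | exact h1 h'.symm)

lemma deltaFun_eq_one {m k : ℕ} {ξ : ℝ} (h : (k : ℝ) ≤ (m : ℝ) * ξ) : deltaFun m k ξ = 1 := by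
  unfold deltaFun
  have hk : (1 : ℝ) ≤ (m : ℝ) * ξ - ((k : ℝ) - 1) := by linarith
  rw [max_eq_right (by linarith)]
  exact min_eq_left hk

lemma deltaFun_eq_zero {m k : ℕ} {ξ : ℝ} (h : (m : ℝ) * ξ ≤ (k : ℝ) - 1) : deltaFun m k ξ = 0 := by
  unfold deltaFun
  rw [max_eq_left (by linarith)]
  exact min_eq_right (by norm_num)

lemma fac_eq_one {n : ℕ} {c : ℝ → Matrix (Fin 2) (Fin 2) ℂ} {i j : ℕ} {ξ : ℝ} {t : ℕ}
    (hc0 : c 0 = 1) (hδ : deltaFun (j - i) (j - i - t) ξ = 0) : fac n c i j ξ t = 1 := by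
  unfold fac
  split_ifs with h
  · exact uSwap_eq_one (by rw [hδ, hc0])
  · rfl

lemma fac_ne_zero {n : ℕ} {c : ℝ → Matrix (Fin 2) (Fin 2) ℂ} {i j : ℕ} {ξ : ℝ} {t : ℕ}
    {p q : Fin n} (h : fac n c i j ξ t p q ≠ 0) :
    q = p ∨ (((p : ℕ) = i + t - 1 ∨ (p : ℕ) = i + t) ∧ ((q : ℕ) = i + t - 1 ∨ (q : ℕ) = i + t)) := by
  unfold fac at h
  split_ifs at h with hcond
  · rcases uSwap_ne_zero h with h1 | ⟨h1, h2⟩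
    · exact Or.inl h1
    · refine Or.inr ⟨?_, ?_⟩
      · rcases h1 with h1 | h1 <;> [left; right] <;> rw [h1]
      · rcases h2 with h2 | h2 <;> [left; right] <;> rw [h2]
  · left
    by_contra hq
    exact h (Matrix.one_apply_ne (Ne.symm hq))

lemma fac_swap_apply {n : ℕ} {c : ℝ → Matrix (Fin 2) (Fin 2) ℂ} {i j : ℕ} {ξ : ℝ} {s : ℕ}
    (hc1 : c 1 = !![0, 1; 1, 0]) (h1 : 1 ≤ i) (h2 : i + s < j) (h3 : j ≤ n)
    (hδ : deltaFun (j - i) (j - i - s) ξ = 1) (p q : Fin n) :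
    fac n c i j ξ s p q =
      if (q : ℕ) = (if (p : ℕ) = i + s - 1 then i + s
        else if (p : ℕ) = i + s then i + s - 1 else (p : ℕ)) then 1 else 0 := by
  unfold fac
  rw [dif_pos ⟨h1, h2, h3⟩]
  unfold uSwap
  rw [if_neg (by simp only [ne_eq, Fin.mk.injEq]; omega)]
  rw [hδ, hc1]
  have hp := p.2
  have hq := q.2
  have e00 : (!![(0:ℂ), 1; 1, 0]) 0 0 = 0 := rfl
  have e01 : (!![(0:ℂ), 1; 1, 0]) 0 1 = 1 := rfl
  have e10 : (!![(0:ℂ), 1; 1, 0]) 1 0 = 1 := rfl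
  have e11 : (!![(0:ℂ), 1; 1, 0]) 1 1 = 0 := rfl
  simp only [Matrix.of_apply, e00, e01, e10, e11, Fin.ext_iff]
  split_ifs <;> first | rfl | omega

def sigf (i s j p : ℕ) : ℕ :=
  if p = i - 1 + s then j - 1 else if i - 1 + s < p ∧ p ≤ j - 1 then p - 1 else p

lemma TmA (n : ℕ) (c : ℝ → Matrix (Fin 2) (Fin 2) ℂ) (i j : ℕ) (ξ : ℝ)
    (hc1 : c 1 = !![0, 1; 1, 0]) (hi : 1 ≤ i) (hij : i ≤ j) (hjn : j ≤ n) :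
    ∀ d s, j - i - s = d → s ≤ j - i →
      (∀ t, s ≤ t → t < j - i → deltaFun (j - i) (j - i - t) ξ = 1) →
      ∀ p q : Fin n, Tm n c i j ξ s p q = if (q : ℕ) = sigf i s j (p : ℕ) then 1 else 0 := by
  intro d
  induction d with
  | zero =>
    intro s hd hs _ p q
    rw [Tm_last n c i j ξ s (by omega)]
    have hp := p.2
    have : sigf i s j (p : ℕ) = (p : ℕ) := by
      unfold sigf; split_ifs <;> omega
    rw [this, Matrix.one_apply]
    simp [Fin.ext_iff, eq_comm]
  | succ d ih =>
    intro s hd hs hone p q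
    have hslt : s < j - i := by omega
    have hisj : i + s < j := by omega
    rw [Tm_succ n c i j ξ s hslt, Matrix.mul_apply]
    set τ : ℕ := if (p : ℕ) = i + s - 1 then i + s
      else if (p : ℕ) = i + s then i + s - 1 else (p : ℕ) with hτ
    have hτlt : τ < n := by
      have hp := p.2
      rw [hτ]; split_ifs <;> omega
    have hcalc : ∀ x : Fin n, fac n c i j ξ s p x * Tm n c i j ξ (s + 1) x q
        = (if x = (⟨τ, hτlt⟩ : Fin n) then Tm n c i j ξ (s + 1) x q else 0) := by
      intro x
      rw [fac_swap_apply hc1 hi hisj hjn (hone s le_rfl hslt) p x, ← hτ]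
      by_cases hx : (x : ℕ) = τ
      · rw [if_pos hx, if_pos (Fin.ext hx), one_mul]
      · rw [if_neg hx, if_neg (by simpa [Fin.ext_iff] using hx), zero_mul]
    rw [Finset.sum_congr rfl fun x _ => hcalc x, Finset.sum_ite_eq' Finset.univ]
    rw [if_pos (Finset.mem_univ _)]
    rw [ih (s + 1) (by omega) (by omega) (fun t ht htl => hone t (by omega) htl)]
    have : sigf i (s + 1) j τ = sigf i s j (p : ℕ) := by
      have hp := p.2
      unfold sigf
      rw [hτ]
      split_ifs <;> omega
    rw [this]

lemma Tm_prefix (n : ℕ) (c : ℝ → Matrix (Fin 2) (Fin 2) ℂ) (i j : ℕ) (ξ : ℝ) (s' : ℕ)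
    (hs' : s' ≤ j - i) :
    ∀ d s, s' - s = d → s ≤ s' →
      (∀ t, s ≤ t → t < s' → fac n c i j ξ t = 1) →
      Tm n c i j ξ s = Tm n c i j ξ s' := by
  intro d
  induction d with
  | zero =>
    intro s hd hs _
    rw [show s = s' by omega]
  | succ d ih =>
    intro s hd hs hone
    have hss : s < s' := by omega
    rw [Tm_succ n c i j ξ s (by omega), hone s le_rfl hss, one_mul]
    exact ih (s + 1) (by omega) (by omega) (fun t ht htl => hone t (by omega) htl)

def rhof (i t0 j x : ℕ) : ℕ :=
  if x = j - 1 then i + t0 else if i + t0 ≤ x ∧ x ≤ j - 2 then x + 1 else x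

lemma sigf_rhof_iff {i t0 j x y n : ℕ} (hi : 1 ≤ i) (he : i + t0 ≤ j - 1) (hj : 1 ≤ j)
    (hjn : j ≤ n) (hx : x < n) (hy : y < n) :
    x = sigf i (t0 + 1) j y ↔ y = rhof i t0 j x := by
  unfold sigf rhof
  split_ifs <;> omega


theorem stmt_11 (n : ℕ) (hn : 1 ≤ n) (c : ℝ → Matrix (Fin 2) (Fin 2) ℂ)
    (hc0 : c 0 = 1) (hc1 : c 1 = !![0, 1; 1, 0])
    (hcU : ∀ θ : ℝ, 0 ≤ θ → θ ≤ 1 → c θ ∈ Matrix.unitaryGroup (Fin 2) ℂ)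
    (D : Matrix (Fin n) (Fin n) ℂ) (j : ℕ) (hj1 : 1 ≤ j) (hjn : j ≤ n)
    (hD : hasZeroCross D ⟨j - 1, by omega⟩)
    (i : ℕ) (hi1 : 1 ≤ i) (hij : i ≤ j) (ξ : ℝ) (hξ0 : 0 ≤ ξ) (hξ1 : ξ ≤ 1) :
    bandwidth (wMat n c i j hi1 hjn hij ξ * D * star (wMat n c i j hi1 hjn hij ξ)) ≤
      bandwidth D + 2 := by
  classical
  have hb : ∀ p q : Fin n, bandwidth D ≤ Nat.dist (p : ℕ) (q : ℕ) → D p q = 0 := by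
    have hne : n ∈ {m : ℕ | ∀ p q : Fin n, m ≤ Nat.dist (p : ℕ) (q : ℕ) → D p q = 0} := by
      intro p q hpq
      exfalso
      have hp := p.2; have hq := q.2
      simp [Nat.dist] at hpq
      omega
    exact Nat.sInf_mem ⟨n, hne⟩
  set W := wMat n c i j hi1 hjn hij ξ with hWdef
  have hWT : W = Tm n c i j ξ 0 := wMat_eq_Tm n c i j hi1 hjn hij ξ
  -- the numbers
  set m := j - i with hm
  set a : ℝ := (m : ℝ) * ξ with ha
  set k := ⌈a⌉₊ with hk
  have ha0 : 0 ≤ a := mul_nonneg (Nat.cast_nonneg _) hξ0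
  have hkm : k ≤ m := Nat.ceil_le.mpr (by
    rw [ha]
    nlinarith [Nat.cast_nonneg (α := ℝ) m])
  set t0 := m - k with ht0
  have hδ0 : ∀ t, t < t0 → deltaFun m (m - t) ξ = 0 := by
    intro t ht
    apply deltaFun_eq_zero
    have h1 : k + 1 ≤ m - t := by omega
    have h2 : (k : ℝ) + 1 ≤ ((m - t : ℕ) : ℝ) := by exact_mod_cast h1
    have h3 : a ≤ (k : ℝ) := Nat.le_ceil a
    rw [ha] at h3
    linarith
  have hδ1 : ∀ t, t0 < t → t < m → deltaFun m (m - t) ξ = 1 := by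
    intro t ht htm
    apply deltaFun_eq_one
    have hk1 : 1 ≤ k := by omega
    have h1 : m - t + 1 ≤ k := by omega
    have h2 : ((m - t : ℕ) : ℝ) + 1 ≤ (k : ℝ) := by exact_mod_cast h1
    have h3 : (k : ℝ) < a + 1 := Nat.ceil_lt_add_one ha0
    rw [ha] at h3
    linarith
  have KEY : ∀ p x : Fin n, W p x ≠ 0 → (x : ℕ) ≠ j - 1 →
      (x : ℕ) = (p : ℕ) ∨ (x : ℕ) + 1 = (p : ℕ) := by
    by_cases hk0 : k = 0
    · -- everything is the identity
      have h1 : Tm n c i j ξ 0 = 1 := by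
        rw [Tm_prefix n c i j ξ m le_rfl m 0 (by omega) (by omega)
          (fun t _ htl => fac_eq_one hc0 (hδ0 t (by omega))), Tm_last n c i j ξ m le_rfl]
      intro p x hne _
      rw [hWT, h1] at hne
      left
      by_contra hx
      exact hne (Matrix.one_apply_ne (fun h => hx (by rw [h])))
    · have hk1 : 1 ≤ k := by omega
      have ht0m : t0 < m := by omega
      have he : i + t0 ≤ j - 1 := by omega
      have hpre : Tm n c i j ξ 0 = Tm n c i j ξ t0 :=
        Tm_prefix n c i j ξ t0 (by omega) t0 0 (by omega) (by omega)
          (fun t _ htl => fac_eq_one hc0 (hδ0 t htl))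
      have hρlt : ∀ x : Fin n, rhof i t0 j (x : ℕ) < n := by
        intro x
        have hx := x.2
        unfold rhof
        split_ifs <;> omega
      have hB : ∀ p x : Fin n, Tm n c i j ξ t0 p x
          = fac n c i j ξ t0 p ⟨rhof i t0 j (x : ℕ), hρlt x⟩ := by
        intro p x
        rw [Tm_succ n c i j ξ t0 ht0m, Matrix.mul_apply]
        have hsum : ∀ y : Fin n, fac n c i j ξ t0 p y * Tm n c i j ξ (t0 + 1) y x
            = (if y = (⟨rhof i t0 j (x : ℕ), hρlt x⟩ : Fin n)
                then fac n c i j ξ t0 p y else 0) := by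
          intro y
          rw [TmA n c i j ξ hc1 hi1 hij hjn (m - (t0 + 1)) (t0 + 1) rfl (by omega)
            (fun t ht htl => hδ1 t (by omega) htl) y x]
          have hiff : ((x : ℕ) = sigf i (t0 + 1) j (y : ℕ))
              ↔ (y = (⟨rhof i t0 j (x : ℕ), hρlt x⟩ : Fin n)) := by
            rw [Fin.ext_iff]
            exact sigf_rhof_iff hi1 he hj1 hjn x.2 y.2
          by_cases hcnd : (x : ℕ) = sigf i (t0 + 1) j (y : ℕ)
          · rw [if_pos hcnd, mul_one, if_pos (hiff.mp hcnd)]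
          · rw [if_neg hcnd, mul_zero, if_neg (fun h => hcnd (hiff.mpr h))]
        rw [Finset.sum_congr rfl fun y _ => hsum y, Finset.sum_ite_eq' Finset.univ,
          if_pos (Finset.mem_univ _)]
      intro p x hne hx
      rw [hWT, hpre, hB] at hne
      have hsupp := fac_ne_zero hne
      rw [Fin.ext_iff] at hsupp
      simp only at hsupp
      have hp := p.2; have hxn := x.2
      unfold rhof at hsupp
      split_ifs at hsupp <;> omega
  apply Nat.sInf_le
  intro p q hpq
  rw [Matrix.mul_apply]
  apply Finset.sum_eq_zero
  intro y _
  by_cases hWq : W q y = 0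
  · rw [Matrix.star_apply, hWq, star_zero, mul_zero]
  · have hrow : (W * D) p y = 0 := by
      rw [Matrix.mul_apply]
      apply Finset.sum_eq_zero
      intro x _
      by_cases hWp : W p x = 0
      · rw [hWp, zero_mul]
      · have hDxy : D x y = 0 := by
          by_cases hx : (x : ℕ) = j - 1
          · have hxx : x = (⟨j - 1, by omega⟩ : Fin n) := Fin.ext hx
            rw [hxx]; exact hD.1 y
          by_cases hy : (y : ℕ) = j - 1
          · have hyy : y = (⟨j - 1, by omega⟩ : Fin n) := Fin.ext hy
            rw [hyy]; exact hD.2 x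
          have h1 := KEY p x hWp hx
          have h2 := KEY q y hWq hy
          apply hb
          simp [Nat.dist] at hpq ⊢
          omega
        rw [hDxy, mul_zero]
    rw [hrow, zero_mul]
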